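/- Let 0 ≤ a < b and assume Σ_{n≥1}‖P_E T'ⁿ‖ρ^{-n} + Σ_{n≥0}‖P_E T*ⁿ‖ρⁿ < ∞ for every ρ ∈ (a,b), so that for every λ ∈ A(a,b) and e ∈ E the vector Ψ̃(conj(λ))e := Σ_{n≥1} conj(λ)^{-n} T'*ⁿ e + Σ_{n≥0} conj(λ)ⁿ Tⁿ e is a well-defined element of H. If the linear span of {T'*ⁿ e : n ∈ ℕ, e ∈ E} ∪ {Tⁿ e : n ∈ ℕ, e ∈ E} is dense in H, then the linear span of {Ψ̃(conj(λ))e : e ∈ E, λ ∈ A(a,b)} is dense in H. -/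

import Mathlib

/-!
Let `x` be orthogonal to every `Ψ̃(conj λ) e` and fix `ρ ∈ (a, b)`. For `e ∈ E` put
`u n = Tⁿ e` and `u (-(n + 1)) = T'*ⁿ⁺¹ e`; since `‖B e‖ ≤ ‖P_E B*‖ ‖e‖` for `e ∈ E`, the
hypothesis makes `∑ₖ ‖u k‖ ρᵏ` finite, and `⟪x, Ψ̃(conj λ) e⟫ = ∑ₖ ⟪x, u k⟫ λᵏ` vanishes on the
circle `|λ| = ρ`. On that circle the Laurent series is an absolutely convergent Fourier series with
coefficients `⟪x, u k⟫ ρᵏ`; as the characters are orthonormal in `L²`, all coefficients vanish.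
So `x` is orthogonal to all `T'*ⁿ e` and `Tⁿ e`, whose span is dense, hence `x = 0`.
-/

open ContinuousLinearMap

/-- Orthogonal projection onto the closed subspace `E`, as an operator `H →L[ℂ] H`. -/
noncomputable def PE {H : Type*} [NormedAddCommGroup H] [InnerProductSpace ℂ H]
    (E : Submodule ℂ H) [CompleteSpace E] : H →L[ℂ] H :=
  E.subtypeL.comp E.orthogonalProjection

/-- The open annulus A(a,b) = {z ∈ ℂ : a < |z| < b}. -/
def annulus (a b : ℝ) : Set ℂ := {z : ℂ | a < ‖z‖ ∧ ‖z‖ < b}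

open scoped InnerProductSpace

theorem Orthonormal.eq_zero_of_hasSum_smul_eq_zero {𝕜 E ι : Type*} [RCLike 𝕜]
    [NormedAddCommGroup E] [InnerProductSpace 𝕜 E] {v : ι → E} (hv : Orthonormal 𝕜 v)
    {c : ι → 𝕜} (h : HasSum (fun i => c i • v i) 0) (i : ι) : c i = 0 := by
  classical
  have h' := h.mapL (innerSL 𝕜 (v i))
  simp only [innerSL_apply_apply, inner_smul_right, orthonormal_iff_ite.mp hv, mul_ite, mul_one,
    mul_zero, map_zero] at h'
  simpa using h'.tsum_eq

theorem Submodule.mem_orthogonal_span_of_forall_inner_eq_zero {𝕜 E : Type*} [RCLike 𝕜]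
    [NormedAddCommGroup E] [InnerProductSpace 𝕜 E] {s : Set E} {x : E}
    (h : ∀ y ∈ s, ⟪x, y⟫_𝕜 = 0) : x ∈ (span 𝕜 s)ᗮ := by
  have hs : span 𝕜 s ≤ (𝕜 ∙ x)ᗮ :=
    span_le.2 fun y hy => (mem_orthogonal_singleton_iff_inner_right).2 (h y hy)
  exact orthogonal_le hs (le_orthogonal_orthogonal _ (mem_span_singleton_self x))

theorem eq_zero_of_forall_tsum_mul_fourier_eq_zero {T : ℝ} [Fact (0 < T)] {c : ℤ → ℂ}
    (hc : Summable fun k => ‖c k‖) (h : ∀ x : AddCircle T, ∑' k, c k * fourier k x = 0) :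
    c = 0 := by
  have hs : Summable fun k => c k • fourier (T := T) k :=
    .of_norm (by simpa only [norm_smul, fourier_norm, mul_one] using hc)
  have hzero : ∑' k, c k • fourier (T := T) k = 0 := by
    ext x
    simpa using ((ContinuousMap.evalCLM ℂ x).map_tsum hs).trans (h x)
  have hL2 := (hzero ▸ hs.hasSum).mapL (ContinuousMap.toLp (E := ℂ) 2 AddCircle.haarAddCircle ℂ)
  rw [map_zero] at hL2
  funext k
  exact orthonormal_fourier.eq_zero_of_hasSum_smul_eq_zero (by simpa using hL2) k

open Real in
theorem eq_zero_of_forall_tsum_mul_zpow_eq_zero {ρ : ℝ} (hρ : 0 < ρ) {c : ℤ → ℂ}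
    (hc : Summable fun k => ‖c k‖ * ρ ^ k) (h : ∀ z : ℂ, ‖z‖ = ρ → ∑' k, c k * z ^ k = 0) :
    c = 0 := by
  have : Fact (0 < 2 * π) := ⟨by positivity⟩
  have hcρ : (fun k => c k * (ρ : ℂ) ^ k) = 0 := by
    refine eq_zero_of_forall_tsum_mul_fourier_eq_zero (T := 2 * π) ?_ fun x => ?_
    · simpa only [norm_mul, norm_zpow, Complex.norm_real, Real.norm_of_nonneg hρ.le] using hc
    · induction x using QuotientAddGroup.induction_on with | H θ => ?_
      have hz : ‖(ρ : ℂ) * Complex.exp (θ * Complex.I)‖ = ρ := by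
        rw [norm_mul, Complex.norm_exp_ofReal_mul_I, mul_one, Complex.norm_real,
          Real.norm_of_nonneg hρ.le]
      convert h _ hz using 3 with k
      rw [fourier_coe_apply, mul_zpow, ← Complex.exp_int_mul, mul_assoc]
      congr 2
      push_cast
      field_simp
  funext k
  have hρ' : (ρ : ℂ) ≠ 0 := by exact_mod_cast hρ.ne'
  exact (mul_eq_zero.1 (congr_fun hcρ k)).resolve_right (zpow_ne_zero k hρ')

/-- `Int.rec f g` is the two-sided sequence with `f n` at `n` and `g n` at `-(n + 1)`. -/
theorem HasSum.zpow_smul_int_rec {E : Type*} [NormedAddCommGroup E] [NormedSpace ℂ E]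
    {f g : ℕ → E} {z : ℂ} {a b : E} (hf : HasSum (fun n : ℕ => z ^ n • f n) a)
    (hg : HasSum (fun n : ℕ => z ^ (-(n + 1 : ℤ)) • g n) b) :
    HasSum (fun k : ℤ => z ^ k • Int.rec (motive := fun _ => E) f g k) (a + b) := by
  convert hf.int_rec hg using 1
  funext k
  cases k <;> rfl

section HilbertSpace

variable {H : Type*} [NormedAddCommGroup H] [InnerProductSpace ℂ H] [CompleteSpace H]

theorem inner_eq_zero_of_forall_inner_tsum_zpow_smul_eq_zero {ρ : ℝ} (hρ : 0 < ρ) {u : ℤ → H}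
    (hu : Summable fun k => ‖u k‖ * ρ ^ k) {x : H}
    (h : ∀ z : ℂ, ‖z‖ = ρ → ⟪x, ∑' k, z ^ k • u k⟫_ℂ = 0) (k : ℤ) : ⟪x, u k⟫_ℂ = 0 := by
  refine congr_fun (eq_zero_of_forall_tsum_mul_zpow_eq_zero hρ (c := fun k => ⟪x, u k⟫_ℂ) ?_
    fun z hz => ?_) k
  · refine .of_nonneg_of_le (fun _ => by positivity) (fun k => ?_) (hu.mul_left ‖x‖)
    rw [← mul_assoc]
    gcongr
    exact norm_inner_le_norm _ _
  · have hs : Summable fun k => z ^ k • u k :=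
      .of_norm (by simpa only [norm_smul, norm_zpow, hz, mul_comm] using hu)
    rw [← h z hz, ← innerSL_apply_apply, (innerSL ℂ x).map_tsum hs]
    simp only [innerSL_apply_apply, inner_smul_right, mul_comm]

theorem inner_eq_zero_of_forall_inner_tsum_add_tsum_eq_zero {ρ : ℝ} (hρ : 0 < ρ) {f g : ℕ → H}
    (hf : Summable fun n => ‖f n‖ * ρ ^ n) (hg : Summable fun n => ‖g n‖ * ρ ^ (-(n + 1 : ℤ)))
    {x : H} (h : ∀ z : ℂ, ‖z‖ = ρ →
      ⟪x, (∑' n : ℕ, z ^ (-(n + 1 : ℤ)) • g n) + ∑' n : ℕ, z ^ n • f n⟫_ℂ = 0) :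
    (∀ n, ⟪x, f n⟫_ℂ = 0) ∧ ∀ n, ⟪x, g n⟫_ℂ = 0 := by
  let u : ℤ → H := Int.rec (motive := fun _ => H) f g
  have hu : Summable fun k => ‖u k‖ * ρ ^ k :=
    .of_nat_of_neg_add_one (hf.congr fun n => by simp only [zpow_natCast]; rfl) hg
  have hsum : ∀ z : ℂ, ‖z‖ = ρ → ∑' k, z ^ k • u k =
      (∑' n : ℕ, z ^ (-(n + 1 : ℤ)) • g n) + ∑' n : ℕ, z ^ n • f n := fun z hz => by
    have hf' : Summable fun n : ℕ => z ^ n • f n :=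
      .of_norm (by simpa only [norm_smul, norm_pow, hz, mul_comm] using hf)
    have hg' : Summable fun n : ℕ => z ^ (-(n + 1 : ℤ)) • g n :=
      .of_norm (by simpa only [norm_smul, norm_zpow, hz, mul_comm] using hg)
    rw [add_comm]
    exact (hf'.hasSum.zpow_smul_int_rec hg'.hasSum).tsum_eq
  have hperp := inner_eq_zero_of_forall_inner_tsum_zpow_smul_eq_zero hρ hu
    fun z hz => hsum z hz ▸ h z hz
  exact ⟨fun n => hperp n, fun n => hperp (Int.negSucc n)⟩

theorem ContinuousLinearMap.adjoint_pow (A : H →L[ℂ] H) (n : ℕ) :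
    adjoint (A ^ n) = adjoint A ^ n := by
  simp only [← star_eq_adjoint, star_pow]

theorem norm_apply_le_norm_PE_comp_adjoint {E : Submodule ℂ H} [CompleteSpace E]
    (B : H →L[ℂ] H) {e : H} (he : e ∈ E) : ‖B e‖ ≤ ‖PE E ∘L adjoint B‖ * ‖e‖ := by
  have hBe : B e = adjoint (PE E ∘L adjoint B) e := by
    have hP : adjoint (PE E) = PE E := (isSelfAdjoint_starProjection E).adjoint_eq
    have hPe : PE E e = e := Submodule.starProjection_eq_self_iff.mpr he
    rw [adjoint_comp, adjoint_adjoint, hP, comp_apply, hPe]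
  rw [hBe, ← LinearIsometryEquiv.norm_map adjoint (PE E ∘L adjoint B)]
  exact le_opNorm _ _

theorem summable_norm_apply_mul_of_summable_norm_PE_comp_adjoint {E : Submodule ℂ H}
    [CompleteSpace E] {B : ℕ → H →L[ℂ] H} {w : ℕ → ℝ} {e : H} (he : e ∈ E)
    (hB : Summable fun n => ‖PE E ∘L adjoint (B n)‖ * w n) (hw : ∀ n, 0 ≤ w n) :
    Summable fun n => ‖B n e‖ * w n :=
  .of_nonneg_of_le (fun n => mul_nonneg (norm_nonneg _) (hw n))
    (fun n => by
      simpa only [mul_right_comm] using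
        mul_le_mul_of_nonneg_right (norm_apply_le_norm_PE_comp_adjoint (B n) he) (hw n))
    (hB.mul_right ‖e‖)

end HilbertSpace

theorem stmt_11_general {H : Type*} [NormedAddCommGroup H] [InnerProductSpace ℂ H] [CompleteSpace H]
    (T T' : H →L[ℂ] H)
    (E : Submodule ℂ H) [CompleteSpace E]
    (a b : ℝ) (ha : 0 ≤ a) (hab : a < b)
    (hnorm : ∀ ρ ∈ Set.Ioo a b,
      Summable (fun n : ℕ => ‖(PE E).comp (T' ^ (n + 1))‖ * ρ ^ (-(n + 1 : ℤ))) ∧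
      Summable (fun n : ℕ =>
        ‖(PE E).comp ((ContinuousLinearMap.adjoint T) ^ n)‖ * ρ ^ n))
    (hdense : Dense (↑(Submodule.span ℂ
        ({y : H | ∃ (n : ℕ), ∃ e ∈ E, y = ((ContinuousLinearMap.adjoint T') ^ n) e} ∪
         {y : H | ∃ (n : ℕ), ∃ e ∈ E, y = (T ^ n) e})) : Set H)) :
    Dense (↑(Submodule.span ℂ
      {y : H | ∃ lam ∈ annulus a b, ∃ e ∈ E,
        y = (∑' n : ℕ, ((starRingEnd ℂ lam) ^ (-(n + 1 : ℤ))) •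
              ((ContinuousLinearMap.adjoint T') ^ (n + 1)) e) +
            ∑' n : ℕ, ((starRingEnd ℂ lam) ^ n) • (T ^ n) e}) : Set H) := by
  have hρ : (a + b) / 2 ∈ Set.Ioo a b := ⟨by linarith, by linarith⟩
  have hρ0 : 0 < (a + b) / 2 := by linarith
  rw [Submodule.dense_iff_topologicalClosure_eq_top, Submodule.topologicalClosure_eq_top_iff,
    Submodule.eq_bot_iff]
  intro x hx
  have hperp (e : H) (he : e ∈ E) :
      (∀ n, ⟪x, (T ^ n) e⟫_ℂ = 0) ∧ ∀ n, ⟪x, (adjoint T' ^ (n + 1)) e⟫_ℂ = 0 := by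
    refine inner_eq_zero_of_forall_inner_tsum_add_tsum_eq_zero hρ0
      (summable_norm_apply_mul_of_summable_norm_PE_comp_adjoint he
        (by simpa only [adjoint_pow] using (hnorm _ hρ).2) fun n => pow_nonneg hρ0.le n)
      (summable_norm_apply_mul_of_summable_norm_PE_comp_adjoint he
        (by simpa only [adjoint_pow, adjoint_adjoint] using (hnorm _ hρ).1)
        fun n => zpow_nonneg hρ0.le _)
      fun z hz => Submodule.inner_left_of_mem_orthogonal (Submodule.subset_span ?_) hx
    exact ⟨starRingEnd ℂ z, by simpa [annulus, hz] using hρ, e, he, by simp⟩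
  refine hdense.eq_zero_of_mem_orthogonal
    (Submodule.mem_orthogonal_span_of_forall_inner_eq_zero ?_)
  rintro y (⟨n, e, he, rfl⟩ | ⟨n, e, he, rfl⟩)
  · cases n with
    | zero => simpa using (hperp e he).1 0
    | succ n => exact (hperp e he).2 n
  · exact (hperp e he).1 n

theorem stmt_11 {H : Type*} [NormedAddCommGroup H] [InnerProductSpace ℂ H] [CompleteSpace H]
    (T T' W : H →L[ℂ] H)
    (hleft : ∃ S : H →L[ℂ] H, S.comp T = ContinuousLinearMap.id ℂ H)
    (hW1 : W.comp ((ContinuousLinearMap.adjoint T).comp T) = ContinuousLinearMap.id ℂ H)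
    (hW2 : ((ContinuousLinearMap.adjoint T).comp T).comp W = ContinuousLinearMap.id ℂ H)
    (hT' : T' = T.comp W)
    (E : Submodule ℂ H) [CompleteSpace E]
    (a b : ℝ) (ha : 0 ≤ a) (hab : a < b)
    (hnorm : ∀ ρ ∈ Set.Ioo a b,
      Summable (fun n : ℕ => ‖(PE E).comp (T' ^ (n + 1))‖ * ρ ^ (-(n + 1 : ℤ))) ∧
      Summable (fun n : ℕ =>
        ‖(PE E).comp ((ContinuousLinearMap.adjoint T) ^ n)‖ * ρ ^ n))
    (hdense : Dense (↑(Submodule.span ℂ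
        ({y : H | ∃ (n : ℕ), ∃ e ∈ E, y = ((ContinuousLinearMap.adjoint T') ^ n) e} ∪
         {y : H | ∃ (n : ℕ), ∃ e ∈ E, y = (T ^ n) e})) : Set H)) :
    Dense (↑(Submodule.span ℂ
      {y : H | ∃ lam ∈ annulus a b, ∃ e ∈ E,
        y = (∑' n : ℕ, ((starRingEnd ℂ lam) ^ (-(n + 1 : ℤ))) •
              ((ContinuousLinearMap.adjoint T') ^ (n + 1)) e) +
            ∑' n : ℕ, ((starRingEnd ℂ lam) ^ n) • (T ^ n) e}) : Set H) :=
  stmt_11_general T T' E a b ha hab hnorm hdense
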